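/- (White shenanigans) Let (C, A) be an avoider-enforcer position, K ≥ |C| + 2, and consider the Paintbucket position G_K(C, A) with White to move. If White moves at any vertex other than a vertex of type v (i.e., at the universal black vertex r or at a vertex w_k), then Black has a winning strategy in the resulting position. -/
import Mathlib


/-- A Paintbucket position: a colored graph on vertex type `V`, with a finite
set of live vertices, a coloring (`true` = black), and a boolean adjacency. -/
structure PB (V : Type) where
  verts : Finset V
  black : V → Bool
  adj : V → V → Bool

namespace PB

variable {V : Type} [DecidableEq V]

/-- The neighbors of `v` among the live vertices. -/
def nbrs (P : PB V) (v : V) : Finset V :=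
  P.verts.filter fun w => P.adj v w = true

/-- The move of player `p` (`true` = Black) at vertex `v`: delete the
neighbors of `v`, recolor `v` with the mover's color, and connect `v` to all
former neighbors of the deleted vertices. -/
def move (p : Bool) (P : PB V) (v : V) : PB V :=
  let del := P.nbrs v
  let vs := insert v (P.verts \ del)
  { verts := vs
    black := fun x => if x = v then p else P.black x
    adj := fun x y =>
      decide (x ∈ vs) && decide (y ∈ vs) && decide (x ≠ y) &&
        (if x = v then P.adj v y || decide (∃ w ∈ del, P.adj w y = true)
         else if y = v then P.adj v x || decide (∃ w ∈ del, P.adj w x = true)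
         else P.adj x y) }

/-- Player `p` may move at `v` iff the game is not over (at least two vertices
remain), `v` is live, and `v` has the opponent's color. -/
def legal (p : Bool) (P : PB V) (v : V) : Prop :=
  1 < P.verts.card ∧ v ∈ P.verts ∧ P.black v = !p

instance (p : Bool) (P : PB V) (v : V) : Decidable (legal p P v) := by
  unfold legal; infer_instance

/-- `blackWinsAux n p P`: with fuel `n` and player `p` to move, Black wins
with optimal play. When the game is over, Black wins iff the remaining vertex
is black. -/
def blackWinsAux : ℕ → Bool → PB V → Prop
  | 0, _, P => ∃ v ∈ P.verts, P.black v = true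
  | n + 1, p, P =>
    if P.verts.card ≤ 1 then ∃ v ∈ P.verts, P.black v = true
    else if p then ∃ v, legal true P v ∧ blackWinsAux n false (move true P v)
    else ∀ v, legal false P v → blackWinsAux n true (move false P v)

/-- Black wins with `p` to move (fuel `P.verts.card` suffices since every move
in a connected position removes at least one vertex). -/
def blackWins (p : Bool) (P : PB V) : Prop :=
  blackWinsAux P.verts.card p P

/-- The coloring is proper: edges join vertices of different colors. -/
def Bipartite (P : PB V) : Prop :=
  ∀ x y, P.adj x y = true → P.black x ≠ P.black y

/-- Any two live vertices are joined by a path. -/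
def Connected (P : PB V) : Prop :=
  ∀ x ∈ P.verts, ∀ y ∈ P.verts,
    Relation.ReflTransGen (fun a b => P.adj a b = true) x y

/-- A valid Paintbucket position: symmetric irreflexive adjacency supported on
the live vertices, properly two-colored, and connected. -/
def Valid (P : PB V) : Prop :=
  (∀ x y, P.adj x y = P.adj y x) ∧
  (∀ x, P.adj x x = false) ∧
  (∀ x y, P.adj x y = true → x ∈ P.verts ∧ y ∈ P.verts) ∧
  P.Bipartite ∧ P.Connected

/-- Isomorphism of colored positions. -/
def Isom {W : Type} (P : PB V) (Q : PB W) : Prop :=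
  ∃ f : V → W, Set.BijOn f ↑P.verts ↑Q.verts ∧
    (∀ x ∈ P.verts, Q.black (f x) = P.black x) ∧
    ∀ x ∈ P.verts, ∀ y ∈ P.verts, Q.adj (f x) (f y) = P.adj x y

/-- Play out a list of (player, vertex) moves. -/
def run (P : PB V) : List (Bool × V) → PB V
  | [] => P
  | m :: ms => run (move m.1 P m.2) ms

/-- All moves in the list are legal when played in order. -/
def legalRun (P : PB V) : List (Bool × V) → Prop
  | [] => True
  | m :: ms => legal m.1 P m.2 ∧ legalRun (move m.1 P m.2) ms

end PB

/-- Vertices of the gadget graph `G_K(C, A)`: `v i`, `u i` for cells `i`,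
`w k` for `k < K`, `t j k` for avoider-set indices `j`, and `r`, `s`. -/
inductive GV (ι κ : Type) (K : ℕ) where
  | v : ι → GV ι κ K
  | u : ι → GV ι κ K
  | w : Fin K → GV ι κ K
  | t : κ → Fin K → GV ι κ K
  | r : GV ι κ K
  | s : GV ι κ K
  deriving DecidableEq, Fintype

/-- Colors in the gadget graph: `v i`, `w k`, `r` are black; `u i`, `t j k`, `s` are white. -/
def Gblack {ι κ : Type} {K : ℕ} : GV ι κ K → Bool
  | .v _ => true
  | .w _ => true
  | .r => true
  | _ => false

/-- Orientation of the edges of the gadget graph. -/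
def Gedge {ι κ : Type} [DecidableEq ι] {K : ℕ} (A : κ → Finset ι) :
    GV ι κ K → GV ι κ K → Bool
  | .r, .u _ => true
  | .v i, .u i' => decide (i = i')
  | .v _, .s => true
  | .t _ _, .r => true
  | .s, .r => true
  | .t _ _, .w _ => true
  | .s, .w _ => true
  | .v i, .t j _ => decide (i ∈ A j)
  | _, _ => false

/-- The gadget position `G_K(C, A)`, where the cells are the elements of `ι`
and the avoider sets are `A j` for `j : κ`. -/
def GPos {ι κ : Type} [Fintype ι] [Fintype κ] [DecidableEq ι] [DecidableEq κ]
    (A : κ → Finset ι) (K : ℕ) : PB (GV ι κ K) :=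
  { verts := Finset.univ
    black := Gblack
    adj := fun x y => Gedge A x y || Gedge A y x }

set_option linter.unusedSectionVars false

namespace PB
variable {V : Type} [DecidableEq V]

/-- Two positions agreeing on live data. -/
def Agrees (P Q : PB V) : Prop :=
  P.verts = Q.verts ∧ (∀ x ∈ P.verts, P.black x = Q.black x) ∧
  ∀ x ∈ P.verts, ∀ y ∈ P.verts, P.adj x y = Q.adj x y

lemma move_verts (p : Bool) (P : PB V) (v : V) :
    (move p P v).verts = insert v (P.verts \ P.nbrs v) := rfl

lemma move_black (p : Bool) (P : PB V) (v x : V) :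
    (move p P v).black x = if x = v then p else P.black x := rfl

lemma mem_nbrs {P : PB V} {v x : V} :
    x ∈ P.nbrs v ↔ x ∈ P.verts ∧ P.adj v x = true := by
  simp [nbrs]

lemma move_adj_iff (p : Bool) (P : PB V) (v x y : V) :
    (move p P v).adj x y = true ↔
      x ∈ (move p P v).verts ∧ y ∈ (move p P v).verts ∧ x ≠ y ∧
      ((x = v ∧ (P.adj v y = true ∨ ∃ w ∈ P.nbrs v, P.adj w y = true)) ∨
       (x ≠ v ∧ y = v ∧ (P.adj v x = true ∨ ∃ w ∈ P.nbrs v, P.adj w x = true)) ∨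
       (x ≠ v ∧ y ≠ v ∧ P.adj x y = true)) := by
  show (_ && _ && _ && _) = true ↔ _
  simp only [Bool.and_eq_true, decide_eq_true_eq]
  constructor
  · rintro ⟨⟨⟨hx, hy⟩, hxy⟩, h⟩
    refine ⟨hx, hy, hxy, ?_⟩
    split_ifs at h with h1 h2
    · simp only [Bool.or_eq_true, decide_eq_true_eq] at h
      exact Or.inl ⟨h1, h⟩
    · simp only [Bool.or_eq_true, decide_eq_true_eq] at h
      exact Or.inr (Or.inl ⟨h1, h2, h⟩)
    · exact Or.inr (Or.inr ⟨h1, h2, h⟩)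
  · rintro ⟨hx, hy, hxy, h⟩
    refine ⟨⟨⟨hx, hy⟩, hxy⟩, ?_⟩
    rcases h with ⟨h1, h⟩ | ⟨h1, h2, h⟩ | ⟨h1, h2, h⟩
    · rw [if_pos h1]
      simp only [Bool.or_eq_true, decide_eq_true_eq]; exact h
    · rw [if_neg h1, if_pos h2]
      simp only [Bool.or_eq_true, decide_eq_true_eq]; exact h
    · rw [if_neg h1, if_neg h2]; exact h

lemma Agrees.nbrs_eq {P Q : PB V} (h : Agrees P Q) {v : V} (hv : v ∈ P.verts) :
    P.nbrs v = Q.nbrs v := by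
  obtain ⟨h1, h2, h3⟩ := h
  ext x
  simp only [mem_nbrs, ← h1]
  constructor
  · rintro ⟨hx, ha⟩; exact ⟨hx, by rw [← h3 v hv x hx]; exact ha⟩
  · rintro ⟨hx, ha⟩; exact ⟨hx, by rw [h3 v hv x hx]; exact ha⟩

lemma Agrees.move {P Q : PB V} (h : Agrees P Q) (p : Bool) {v : V} (hv : v ∈ P.verts) :
    Agrees (move p P v) (move p Q v) := by
  obtain ⟨h1, h2, h3⟩ := h
  have hn : P.nbrs v = Q.nbrs v := Agrees.nbrs_eq ⟨h1, h2, h3⟩ hv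
  have hverts : (PB.move p P v).verts = (PB.move p Q v).verts := by
    rw [move_verts, move_verts, h1, hn]
  have hsub : ∀ x, x ∈ (PB.move p P v).verts → x ∈ P.verts := by
    intro x hx
    rw [move_verts, Finset.mem_insert] at hx
    rcases hx with rfl | hx
    · exact hv
    · exact (Finset.mem_sdiff.mp hx).1
  refine ⟨hverts, ?_, ?_⟩
  · intro x hx
    rw [move_black, move_black]
    split_ifs with hxv
    · rfl
    · exact h2 x (hsub x hx)
  · intro x hx y hy
    rw [Bool.eq_iff_iff, move_adj_iff, move_adj_iff, ← hverts, ← hn]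
    have hx' := hsub x hx
    have hy' := hsub y hy
    have kadj : ∀ a b, a ∈ P.verts → b ∈ P.verts → (P.adj a b = true ↔ Q.adj a b = true) := by
      intro a b ha hb; rw [h3 a ha b hb]
    have kex : ∀ b, b ∈ P.verts →
        ((∃ w ∈ P.nbrs v, P.adj w b = true) ↔ (∃ w ∈ P.nbrs v, Q.adj w b = true)) := by
      intro b hb
      constructor
      · rintro ⟨w, hw, hwa⟩
        exact ⟨w, hw, (kadj w b (mem_nbrs.mp hw).1 hb).mp hwa⟩
      · rintro ⟨w, hw, hwa⟩
        exact ⟨w, hw, (kadj w b (mem_nbrs.mp hw).1 hb).mpr hwa⟩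
    constructor
    · rintro ⟨_, _, hxy, hcase⟩
      refine ⟨hx, hy, hxy, ?_⟩
      rcases hcase with ⟨he, hc⟩ | ⟨hne, he, hc⟩ | ⟨hn1, hn2, hc⟩
      · exact Or.inl ⟨he, by rw [← kadj v y hv hy', ← kex y hy']; exact hc⟩
      · exact Or.inr (Or.inl ⟨hne, he, by rw [← kadj v x hv hx', ← kex x hx']; exact hc⟩)
      · exact Or.inr (Or.inr ⟨hn1, hn2, (kadj x y hx' hy').mp hc⟩)
    · rintro ⟨_, _, hxy, hcase⟩
      refine ⟨hx, hy, hxy, ?_⟩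
      rcases hcase with ⟨he, hc⟩ | ⟨hne, he, hc⟩ | ⟨hn1, hn2, hc⟩
      · exact Or.inl ⟨he, by rw [kadj v y hv hy', kex y hy']; exact hc⟩
      · exact Or.inr (Or.inl ⟨hne, he, by rw [kadj v x hv hx', kex x hx']; exact hc⟩)
      · exact Or.inr (Or.inr ⟨hn1, hn2, (kadj x y hx' hy').mpr hc⟩)

lemma Agrees.blackWinsAux {P Q : PB V} (h : Agrees P Q) :
    ∀ n p, (blackWinsAux n p P ↔ blackWinsAux n p Q) := by
  intro n
  induction n generalizing P Q with
  | zero =>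
    intro p
    simp only [PB.blackWinsAux]
    constructor
    · rintro ⟨v, hv, hb⟩
      exact ⟨v, h.1 ▸ hv, by rw [← h.2.1 v hv]; exact hb⟩
    · rintro ⟨v, hv, hb⟩
      exact ⟨v, h.1 ▸ hv, by rw [h.2.1 v (h.1 ▸ hv)]; exact hb⟩
  | succ n ih =>
    intro p
    have hc : P.verts.card = Q.verts.card := by rw [h.1]
    simp only [PB.blackWinsAux, hc]
    have hend : (∃ v ∈ P.verts, P.black v = true) ↔ ∃ v ∈ Q.verts, Q.black v = true := by
      constructor
      · rintro ⟨v, hv, hb⟩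
        exact ⟨v, h.1 ▸ hv, by rw [← h.2.1 v hv]; exact hb⟩
      · rintro ⟨v, hv, hb⟩
        exact ⟨v, h.1 ▸ hv, by rw [h.2.1 v (h.1 ▸ hv)]; exact hb⟩
    have hleg : ∀ p' v, legal p' P v ↔ legal p' Q v := by
      intro p' v
      unfold legal
      rw [hc, h.1]
      constructor
      · rintro ⟨ha, hb, hcc⟩
        exact ⟨ha, hb, by rw [← h.2.1 v (h.1 ▸ hb)]; exact hcc⟩
      · rintro ⟨ha, hb, hcc⟩
        exact ⟨ha, hb, by rw [h.2.1 v (h.1 ▸ hb)]; exact hcc⟩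
    split_ifs with h1 h2
    · exact hend
    · constructor
      · rintro ⟨v, hv, hw⟩
        exact ⟨v, (hleg true v).mp hv, (ih (h.move true hv.2.1) false).mp hw⟩
      · rintro ⟨v, hv, hw⟩
        refine ⟨v, (hleg true v).mpr hv, ?_⟩
        exact (ih (h.move true ((hleg true v).mpr hv).2.1) false).mpr hw
    · constructor
      · rintro hall v hv
        exact (ih (h.move false ((hleg false v).mpr hv).2.1) true).mp
          (hall v ((hleg false v).mpr hv))
      · rintro hall v hv
        exact (ih (h.move false hv.2.1) true).mpr (hall v ((hleg false v).mp hv))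

end PB
namespace PB
variable {V : Type} [DecidableEq V]

lemma winEnd {P : PB V} {c : V} (hc : c ∈ P.verts) (hb : P.black c = true)
    (h1 : P.verts.card ≤ 1) : ∀ n p, blackWinsAux n p P := by
  intro n p
  cases n with
  | zero => exact ⟨c, hc, hb⟩
  | succ n => rw [blackWinsAux, if_pos h1]; exact ⟨c, hc, hb⟩

/-- If Black can move at a white vertex `c` adjacent to everything else,
Black wins immediately. -/
lemma grab {P : PB V} {c d : V} (hc : c ∈ P.verts) (hcb : P.black c = false)
    (hd : d ∈ P.verts) (hdc : d ≠ c) (hn : P.nbrs c = P.verts.erase c) :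
    ∀ n, 1 ≤ n → blackWinsAux n true P := by
  intro n hn1
  obtain ⟨n, rfl⟩ : ∃ m, n = m + 1 := ⟨n - 1, by omega⟩
  have hcard : 1 < P.verts.card := Finset.one_lt_card.mpr ⟨c, hc, d, hd, (Ne.symm hdc)⟩
  rw [blackWinsAux, if_neg (by omega), if_pos rfl]
  refine ⟨c, ⟨hcard, hc, by simp [hcb]⟩, ?_⟩
  have hverts : (move true P c).verts = {c} := by
    rw [move_verts, hn]
    ext x
    simp only [Finset.mem_insert, Finset.mem_sdiff, Finset.mem_erase, Finset.mem_singleton]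
    constructor
    · rintro (rfl | ⟨hx, hx2⟩)
      · rfl
      · by_contra hne; exact hx2 ⟨hne, hx⟩
    · rintro rfl; exact Or.inl rfl
  have hcm : c ∈ (move true P c).verts := by rw [hverts]; exact Finset.mem_singleton_self c
  have hbm : (move true P c).black c = true := by rw [move_black, if_pos rfl]
  exact winEnd hcm hbm (by rw [hverts]; simp) n false

end PB
open PB

section Gadget
variable {ι κ : Type} [DecidableEq ι] [DecidableEq κ] {K : ℕ}

/-- Oriented edges of the canonical mid-game position. -/
def QE (S : Finset ι) (Pd : Finset (Fin K)) (hub : GV ι κ K) (i0 : ι)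
    (x y : GV ι κ K) : Prop :=
  (x = hub ∧ (y = GV.u i0 ∨ (∃ i ∈ S, y = GV.v i) ∨ (∃ k ∈ Pd, y = GV.w k)))
  ∨ (x = GV.u i0 ∧ ∃ i ∈ S, y = GV.u i)
  ∨ (∃ i ∈ S, x = GV.v i ∧ y = GV.u i)

instance (S : Finset ι) (Pd : Finset (Fin K)) (hub : GV ι κ K) (i0 : ι)
    (x y : GV ι κ K) : Decidable (QE S Pd hub i0 x y) := by
  unfold QE; infer_instance

/-- The canonical mid-game position. -/
def Qpos (S : Finset ι) (Pd : Finset (Fin K)) (hub : GV ι κ K) (i0 : ι) :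
    PB (GV ι κ K) :=
  { verts := ({hub, GV.u i0} : Finset _) ∪ S.image GV.v ∪ S.image GV.u ∪ Pd.image GV.w
    black := fun x => if x = hub then false else if x = GV.u i0 then true else Gblack x
    adj := fun x y => decide (QE S Pd hub i0 x y ∨ QE S Pd hub i0 y x) }

lemma mem_Qpos {S : Finset ι} {Pd : Finset (Fin K)} {hub : GV ι κ K} {i0 : ι}
    {x : GV ι κ K} :
    x ∈ (Qpos S Pd hub i0).verts ↔
      x = hub ∨ x = GV.u i0 ∨ (∃ i ∈ S, x = GV.v i) ∨ (∃ i ∈ S, x = GV.u i) ∨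
        ∃ k ∈ Pd, x = GV.w k := by
  simp only [Qpos, Finset.mem_union, Finset.mem_insert, Finset.mem_singleton,
    Finset.mem_image]
  constructor
  · rintro ((((h | h) | ⟨i, hi, rfl⟩) | ⟨i, hi, rfl⟩) | ⟨k, hk, rfl⟩)
    · exact Or.inl h
    · exact Or.inr (Or.inl h)
    · exact Or.inr (Or.inr (Or.inl ⟨i, hi, rfl⟩))
    · exact Or.inr (Or.inr (Or.inr (Or.inl ⟨i, hi, rfl⟩)))
    · exact Or.inr (Or.inr (Or.inr (Or.inr ⟨k, hk, rfl⟩)))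
  · rintro (h | h | ⟨i, hi, rfl⟩ | ⟨i, hi, rfl⟩ | ⟨k, hk, rfl⟩)
    · exact Or.inl (Or.inl (Or.inl (Or.inl h)))
    · exact Or.inl (Or.inl (Or.inl (Or.inr h)))
    · exact Or.inl (Or.inl (Or.inr ⟨i, hi, rfl⟩))
    · exact Or.inl (Or.inr ⟨i, hi, rfl⟩)
    · exact Or.inr ⟨k, hk, rfl⟩

lemma Qpos_adj_iff {S : Finset ι} {Pd : Finset (Fin K)} {hub : GV ι κ K} {i0 : ι}
    {x y : GV ι κ K} :
    (Qpos S Pd hub i0).adj x y = true ↔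
      QE S Pd hub i0 x y ∨ QE S Pd hub i0 y x := by
  simp [Qpos]

lemma Qpos_black {S : Finset ι} {Pd : Finset (Fin K)} {hub : GV ι κ K} {i0 : ι}
    (x : GV ι κ K) :
    (Qpos S Pd hub i0).black x =
      if x = hub then false else if x = GV.u i0 then true else Gblack x := rfl

/-- Acceptable hubs. -/
def HubOk (S : Finset ι) (Pd : Finset (Fin K)) (hub : GV ι κ K) : Prop :=
  (∃ k0, hub = GV.w k0 ∧ k0 ∉ Pd) ∨ (∃ j, hub = GV.v j ∧ j ∉ S)

end Gadget
section Gadget2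
open PB
variable {ι κ : Type} [DecidableEq ι] [DecidableEq κ] {K : ℕ}
variable {S : Finset ι} {Pd : Finset (Fin K)} {hub : GV ι κ K} {i0 : ι}

lemma HubOk.ne_u (hh : HubOk S Pd hub) (i : ι) : hub ≠ GV.u i := by
  rcases hh with ⟨k0, rfl, -⟩ | ⟨j, rfl, -⟩ <;> simp

lemma HubOk.ne_v (hh : HubOk S Pd hub) {i : ι} (hi : i ∈ S) : hub ≠ GV.v i := by
  rcases hh with ⟨k0, rfl, -⟩ | ⟨j, rfl, hj⟩
  · simp
  · simp only [ne_eq, GV.v.injEq]; rintro rfl; exact hj hi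

lemma HubOk.ne_w (hh : HubOk S Pd hub) {k : Fin K} (hk : k ∈ Pd) : hub ≠ GV.w k := by
  rcases hh with ⟨k0, rfl, hk0⟩ | ⟨j, rfl, -⟩
  · simp only [ne_eq, GV.w.injEq]; rintro rfl; exact hk0 hk
  · simp

lemma hub_mem : hub ∈ (Qpos S Pd hub i0).verts := mem_Qpos.mpr (Or.inl rfl)

lemma u0_mem : GV.u i0 ∈ (Qpos S Pd hub i0).verts := mem_Qpos.mpr (Or.inr (Or.inl rfl))

lemma Qpos_nbrs_w (hh : HubOk S Pd hub) {k1 : Fin K} (hk1 : k1 ∈ Pd) :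
    (Qpos S Pd hub i0).nbrs (GV.w k1) = {hub} := by
  have hne := hh.ne_w hk1
  ext x
  simp only [mem_nbrs, Qpos_adj_iff, QE, mem_Qpos, Finset.mem_singleton]
  constructor
  · rintro ⟨hx, h⟩
    rcases h with (⟨h, -⟩ | ⟨h, -⟩ | ⟨i, -, h, -⟩) | (⟨rfl, h⟩ | ⟨-, i, -, h⟩ | ⟨i, -, -, h⟩)
    · exact absurd h hne.symm
    · exact absurd h (by simp)
    · exact absurd h (by simp)
    · rcases h with h | ⟨i, -, h⟩ | ⟨k, -, h⟩ <;> first | rfl | exact absurd h (by simp)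
    · exact absurd h (by simp)
    · exact absurd h (by simp)
  · rintro rfl
    exact ⟨Or.inl rfl, Or.inr (Or.inl ⟨rfl, Or.inr (Or.inr ⟨k1, hk1, rfl⟩)⟩)⟩
end Gadget2
section Gadget3
open PB
variable {ι κ : Type} [DecidableEq ι] [DecidableEq κ] {K : ℕ}
variable {S : Finset ι} {Pd : Finset (Fin K)} {hub : GV ι κ K} {i0 : ι}

lemma Qpos_nbrs_v (hh : HubOk S Pd hub) {i' : ι} (hi' : i' ∈ S) :
    (Qpos S Pd hub i0).nbrs (GV.v i') = {GV.u i', hub} := by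
  have hne := hh.ne_v hi'
  have hu := hh.ne_u
  ext x
  simp only [mem_nbrs, Qpos_adj_iff, QE, mem_Qpos, Finset.mem_insert, Finset.mem_singleton]
  aesop

lemma Qpos_nbrs_u1 (hh : HubOk S Pd hub) {i1 : ι} (hi1 : i1 ∈ S) (hi0 : i0 ∉ S) :
    (Qpos S Pd hub i0).nbrs (GV.u i1) = {GV.v i1, GV.u i0} := by
  have hne := hh.ne_u i1
  have hu := hh.ne_u
  have hne2 : i1 ≠ i0 := fun h => hi0 (h ▸ hi1)
  ext x
  simp only [mem_nbrs, Qpos_adj_iff, QE, mem_Qpos, Finset.mem_insert, Finset.mem_singleton]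
  aesop

lemma Qpos_nbrs_u0 (hh : HubOk S Pd hub) (hi0 : i0 ∉ S) :
    (Qpos S Pd hub i0).nbrs (GV.u i0) = insert hub (S.image GV.u) := by
  have hne := hh.ne_u
  ext x
  simp only [mem_nbrs, Qpos_adj_iff, QE, mem_Qpos, Finset.mem_insert, Finset.mem_image]
  aesop

lemma Qpos_nbrs_hub (hh : HubOk S Pd hub) (hi0 : i0 ∉ S) :
    (Qpos S Pd hub i0).nbrs hub =
      insert (GV.u i0) (S.image GV.v ∪ Pd.image GV.w) := by
  have hne := hh.ne_u
  have hv : ∀ i ∈ S, hub ≠ GV.v i := fun i hi => hh.ne_v hi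
  have hw : ∀ k ∈ Pd, hub ≠ GV.w k := fun k hk => hh.ne_w hk
  ext x
  simp only [mem_nbrs, Qpos_adj_iff, QE, mem_Qpos, Finset.mem_insert, Finset.mem_union,
    Finset.mem_image]
  aesop
end Gadget3
section Gadget4
open PB
set_option maxHeartbeats 1000000
variable {ι κ : Type} [DecidableEq ι] [DecidableEq κ] {K : ℕ}
variable {S : Finset ι} {Pd : Finset (Fin K)} {hub : GV ι κ K} {i0 : ι}

lemma agrees_move_w (hh : HubOk S Pd hub) (hi0 : i0 ∉ S) {k1 : Fin K} (hk1 : k1 ∈ Pd) :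
    Agrees (move false (Qpos S Pd hub i0) (GV.w k1))
           (Qpos S (Pd.erase k1) (GV.w k1) i0) := by
  have hneH : hub ≠ GV.w k1 := hh.ne_w hk1
  have hu := hh.ne_u
  have hv : ∀ i ∈ S, hub ≠ GV.v i := fun i hi => hh.ne_v hi
  have hw : ∀ k ∈ Pd, hub ≠ GV.w k := fun k hk => hh.ne_w hk
  have hnb := Qpos_nbrs_w (i0 := i0) hh hk1
  have hverts : (move false (Qpos S Pd hub i0) (GV.w k1)).verts =
      (Qpos S (Pd.erase k1) (GV.w k1) i0).verts := by
    rw [move_verts, hnb]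
    ext x
    simp only [Finset.mem_insert, Finset.mem_sdiff, Finset.mem_singleton, mem_Qpos,
      Finset.mem_erase]
    by_cases hxk : x = GV.w k1 <;> aesop
  refine ⟨hverts, ?_, ?_⟩
  · intro x hx
    have hxh : x ≠ hub := by
      rw [hverts] at hx
      intro he
      subst he
      rcases mem_Qpos.mp hx with h | h | ⟨i, hi, h⟩ | ⟨i, hi, h⟩ | ⟨k, hk, h⟩
      · exact hneH h
      · exact hu i0 h
      · exact hv i hi h
      · exact hu i h
      · exact hw k (Finset.mem_of_mem_erase hk) h
    rw [move_black, Qpos_black, Qpos_black]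
    by_cases hxk : x = GV.w k1
    · simp [hxk]
    · rw [if_neg hxk, if_neg hxh, if_neg hxk]
  · intro x hx y hy
    have hx' := mem_Qpos.mp (hverts ▸ hx)
    have hy' := mem_Qpos.mp (hverts ▸ hy)
    rw [Bool.eq_iff_iff, move_adj_iff, Qpos_adj_iff]
    rw [hnb]
    simp only [Qpos_adj_iff, QE, mem_Qpos, Finset.mem_singleton, Finset.mem_erase,
      exists_eq_left, ← hverts] at *
    constructor
    · rintro ⟨-, -, hxy, hc⟩
      aesop (config := { maxRuleApplications := 4000 })
    · intro hc
      refine ⟨hx, hy, ?_, ?_⟩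
      · aesop
      · aesop
end Gadget4
section Gadget5
open PB
set_option maxHeartbeats 2000000
variable {ι κ : Type} [DecidableEq ι] [DecidableEq κ] {K : ℕ}
variable {S : Finset ι} {Pd : Finset (Fin K)} {hub : GV ι κ K} {i0 : ι}

lemma HubOk.mono {S' : Finset ι} (hh : HubOk S Pd hub) (hSS : S' ⊆ S) : HubOk S' Pd hub := by
  rcases hh with ⟨k0, h, hk0⟩ | ⟨j, h, hj⟩
  · exact Or.inl ⟨k0, h, hk0⟩
  · exact Or.inr ⟨j, h, fun hj' => hj (hSS hj')⟩

lemma agrees_move_v (hh : HubOk S Pd hub) (hi0 : i0 ∉ S) {i' : ι} (hi' : i' ∈ S) :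
    Agrees (move false (Qpos S Pd hub i0) (GV.v i'))
           (Qpos (S.erase i') Pd (GV.v i') i0) := by
  have hneH : hub ≠ GV.v i' := hh.ne_v hi'
  have hu := hh.ne_u
  have hv : ∀ i ∈ S, hub ≠ GV.v i := fun i hi => hh.ne_v hi
  have hw : ∀ k ∈ Pd, hub ≠ GV.w k := fun k hk => hh.ne_w hk
  have hnb := Qpos_nbrs_v (i0 := i0) hh hi'
  have hverts : (move false (Qpos S Pd hub i0) (GV.v i')).verts =
      (Qpos (S.erase i') Pd (GV.v i') i0).verts := by
    rw [move_verts, hnb]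
    ext x
    simp only [Finset.mem_insert, Finset.mem_sdiff, Finset.mem_singleton, mem_Qpos,
      Finset.mem_erase]
    by_cases hxk : x = GV.v i' <;> aesop
  refine ⟨hverts, ?_, ?_⟩
  · intro x hx
    have hxh : x ≠ hub := by
      rw [hverts] at hx
      intro he
      subst he
      rcases mem_Qpos.mp hx with h | h | ⟨i, hi, h⟩ | ⟨i, hi, h⟩ | ⟨k, hk, h⟩
      · exact hneH h
      · exact hu i0 h
      · exact hv i (Finset.mem_of_mem_erase hi) h
      · exact hu i h
      · exact hw k hk h
    rw [move_black, Qpos_black, Qpos_black]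
    by_cases hxk : x = GV.v i'
    · simp [hxk]
    · rw [if_neg hxk, if_neg hxh, if_neg hxk]
  · intro x hx y hy
    have hx' := mem_Qpos.mp (hverts ▸ hx)
    have hy' := mem_Qpos.mp (hverts ▸ hy)
    rw [Bool.eq_iff_iff, move_adj_iff, Qpos_adj_iff]
    rw [hnb]
    simp only [Qpos_adj_iff, QE, mem_Qpos, Finset.mem_insert, Finset.mem_singleton,
      Finset.mem_erase, exists_eq_left, ← hverts] at *
    constructor
    · rintro ⟨-, -, hxy, hc⟩
      aesop (config := { maxRuleApplications := 8000 })
    · intro hc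
      refine ⟨hx, hy, ?_, ?_⟩
      · aesop (config := { maxRuleApplications := 8000 })
      · aesop (config := { maxRuleApplications := 8000 })

lemma agrees_move_u (hh : HubOk S Pd hub) (hi0 : i0 ∉ S) {i1 : ι} (hi1 : i1 ∈ S) :
    Agrees (move true (Qpos S Pd hub i0) (GV.u i1))
           (Qpos (S.erase i1) Pd hub i1) := by
  have hneH : hub ≠ GV.u i1 := hh.ne_u i1
  have hu := hh.ne_u
  have hv : ∀ i ∈ S, hub ≠ GV.v i := fun i hi => hh.ne_v hi
  have hw : ∀ k ∈ Pd, hub ≠ GV.w k := fun k hk => hh.ne_w hk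
  have hni : i1 ≠ i0 := fun h => hi0 (h ▸ hi1)
  have hnb := Qpos_nbrs_u1 (i0 := i0) hh hi1 hi0
  have hverts : (move true (Qpos S Pd hub i0) (GV.u i1)).verts =
      (Qpos (S.erase i1) Pd hub i1).verts := by
    rw [move_verts, hnb]
    ext x
    simp only [Finset.mem_insert, Finset.mem_sdiff, Finset.mem_singleton, mem_Qpos,
      Finset.mem_erase]
    by_cases hxk : x = GV.u i1 <;> aesop
  refine ⟨hverts, ?_, ?_⟩
  · intro x hx
    have hxh : x ≠ GV.u i0 := by
      rw [hverts] at hx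
      intro he
      subst he
      rcases mem_Qpos.mp hx with h | h | ⟨i, hi, h⟩ | ⟨i, hi, h⟩ | ⟨k, hk, h⟩
      · exact hu i0 h.symm
      · exact hni (by injection h with h2; exact h2.symm)
      · exact absurd h (by simp)
      · injection h with h2; subst h2; exact hi0 (Finset.mem_of_mem_erase hi)
      · exact absurd h (by simp)
    rw [move_black, Qpos_black, Qpos_black]
    by_cases hxk : x = GV.u i1
    · subst hxk; rw [if_pos rfl, if_neg hneH.symm, if_pos rfl]
    · rw [if_neg hxk, if_neg hxk]
      by_cases hxhub : x = hub
      · rw [if_pos hxhub, if_pos hxhub]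
      · rw [if_neg hxhub, if_neg hxhub, if_neg hxh]
  · intro x hx y hy
    have hx' := mem_Qpos.mp (hverts ▸ hx)
    have hy' := mem_Qpos.mp (hverts ▸ hy)
    rw [Bool.eq_iff_iff, move_adj_iff, Qpos_adj_iff]
    rw [hnb]
    simp only [Qpos_adj_iff, QE, mem_Qpos, Finset.mem_insert, Finset.mem_singleton,
      Finset.mem_erase, exists_eq_left, ← hverts] at *
    constructor
    · rintro ⟨-, -, hxy, hc⟩
      aesop (config := { maxRuleApplications := 8000 })
    · intro hc
      refine ⟨hx, hy, ?_, ?_⟩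
      · aesop (config := { maxRuleApplications := 8000 })
      · aesop (config := { maxRuleApplications := 8000 })
end Gadget5
section Gadget6
open PB
set_option maxHeartbeats 2000000
variable {ι κ : Type} [DecidableEq ι] [DecidableEq κ] {K : ℕ}
variable {S : Finset ι} {Pd : Finset (Fin K)} {hub : GV ι κ K} {i0 : ι}

lemma Qpos_grab_hub (hh : HubOk (∅ : Finset ι) Pd hub) (hi0 : i0 ∉ (∅ : Finset ι)) :
    ∀ n, 1 ≤ n → blackWinsAux n true (Qpos (∅ : Finset ι) Pd hub i0) := by
  refine grab (c := hub) (d := GV.u i0) hub_mem ?_ u0_mem (hh.ne_u i0).symm ?_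
  · rw [Qpos_black, if_pos rfl]
  · rw [Qpos_nbrs_hub hh hi0]
    have hu := hh.ne_u
    have hw : ∀ k ∈ Pd, hub ≠ GV.w k := fun k hk => hh.ne_w hk
    ext x
    simp only [Finset.mem_insert, Finset.mem_union, Finset.mem_image, Finset.mem_erase,
      mem_Qpos, Finset.notMem_empty]
    aesop

lemma Qpos_grab_u0 (hh : HubOk S Pd hub) (hi0 : i0 ∉ S) {k1 : Fin K} (hk1 : k1 ∈ Pd) :
    ∀ n, 1 ≤ n → blackWinsAux n true (move false (Qpos S Pd hub i0) (GV.u i0)) := by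
  have hnb := Qpos_nbrs_u0 (i0 := i0) hh hi0
  have hu := hh.ne_u
  have hv : ∀ i ∈ S, hub ≠ GV.v i := fun i hi => hh.ne_v hi
  have hw : ∀ k ∈ Pd, hub ≠ GV.w k := fun k hk => hh.ne_w hk
  refine grab (c := GV.u i0) (d := GV.w k1) ?_ ?_ ?_ (by simp) ?_
  · rw [move_verts]; exact Finset.mem_insert_self _ _
  · rw [move_black, if_pos rfl]
  · rw [move_verts, hnb]
    refine Finset.mem_insert_of_mem (Finset.mem_sdiff.mpr
      ⟨mem_Qpos.mpr (Or.inr (Or.inr (Or.inr (Or.inr ⟨k1, hk1, rfl⟩)))), ?_⟩)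
    simp only [Finset.mem_insert, Finset.mem_image]
    push_neg
    exact ⟨fun h => hw k1 hk1 h.symm, fun i _ => by simp⟩
  · ext x
    simp only [mem_nbrs, move_adj_iff, move_verts, hnb, Finset.mem_erase, mem_Qpos,
      Qpos_adj_iff, QE, Finset.mem_insert, Finset.mem_sdiff, Finset.mem_image,
      Finset.mem_singleton]
    aesop (config := { maxRuleApplications := 8000 })

/-- The main induction: Black wins the `Qpos` middlegame positions. -/
lemma Qpos_wins (m : ℕ) :
    (∀ (S : Finset ι) (Pd : Finset (Fin K)) (hub : GV ι κ K) (i0 : ι),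
      S.card = m → i0 ∉ S → HubOk S Pd hub → S.card + 1 ≤ Pd.card →
      ∀ n, 2 * S.card + 1 ≤ n → blackWinsAux n true (Qpos S Pd hub i0)) ∧
    (∀ (S : Finset ι) (Pd : Finset (Fin K)) (hub : GV ι κ K) (i0 : ι),
      S.card = m → i0 ∉ S → HubOk S Pd hub → S.card + 2 ≤ Pd.card →
      ∀ n, 2 * S.card + 2 ≤ n → blackWinsAux n false (Qpos S Pd hub i0)) := by
  induction m with
  | zero =>
    have hLB : ∀ (S : Finset ι) (Pd : Finset (Fin K)) (hub : GV ι κ K) (i0 : ι),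
        S.card = 0 → i0 ∉ S → HubOk S Pd hub → S.card + 1 ≤ Pd.card →
        ∀ n, 2 * S.card + 1 ≤ n → blackWinsAux n true (Qpos S Pd hub i0) := by
      intro S Pd hub i0 hm hi0 hh hPd n hn
      obtain rfl : S = ∅ := Finset.card_eq_zero.mp hm
      exact Qpos_grab_hub hh hi0 n (by omega)
    refine ⟨hLB, ?_⟩
    intro S Pd hub i0 hm hi0 hh hPd n hn
    obtain rfl : S = ∅ := Finset.card_eq_zero.mp hm
    obtain ⟨n, rfl⟩ : ∃ m, n = m + 1 := ⟨n - 1, by omega⟩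
    have hcard : 1 < (Qpos (∅ : Finset ι) Pd hub i0).verts.card :=
      Finset.one_lt_card.mpr ⟨hub, hub_mem, GV.u i0, u0_mem, hh.ne_u i0⟩
    rw [blackWinsAux, if_neg (by omega), if_neg (by simp)]
    intro v hv
    obtain ⟨-, hvm, hvb⟩ := hv
    rcases mem_Qpos.mp hvm with rfl | rfl | ⟨i, hi, rfl⟩ | ⟨i, hi, rfl⟩ | ⟨k, hk, rfl⟩
    · rw [Qpos_black, if_pos rfl] at hvb; exact absurd hvb (by simp)
    · -- white shifts at the u-hub: Black grabs
      exact Qpos_grab_u0 hh hi0 (k1 := (Finset.card_pos.mp (by omega)).choose)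
        (Finset.card_pos.mp (by omega)).choose_spec n (by omega)
    · exact absurd hi (Finset.notMem_empty i)
    · exact absurd hi (Finset.notMem_empty i)
    · -- white moves at a pendant
      rw [(agrees_move_w hh hi0 hk).blackWinsAux n true]
      exact hLB ∅ (Pd.erase k) (GV.w k) i0 rfl hi0 (Or.inl ⟨k, rfl, Finset.notMem_erase k Pd⟩)
        (by rw [Finset.card_erase_of_mem hk]; omega) n (by omega)
  | succ m ih =>
    have hLB : ∀ (S : Finset ι) (Pd : Finset (Fin K)) (hub : GV ι κ K) (i0 : ι),
        S.card = m + 1 → i0 ∉ S → HubOk S Pd hub → S.card + 1 ≤ Pd.card →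
        ∀ n, 2 * S.card + 1 ≤ n → blackWinsAux n true (Qpos S Pd hub i0) := by
      intro S Pd hub i0 hm hi0 hh hPd n hn
      obtain ⟨i1, hi1⟩ : S.Nonempty := Finset.card_pos.mp (by omega)
      obtain ⟨n, rfl⟩ : ∃ m, n = m + 1 := ⟨n - 1, by omega⟩
      have hcard : 1 < (Qpos S Pd hub i0).verts.card :=
        Finset.one_lt_card.mpr ⟨hub, hub_mem, GV.u i0, u0_mem, hh.ne_u i0⟩
      rw [blackWinsAux, if_neg (by omega), if_pos rfl]
      refine ⟨GV.u i1, ⟨hcard, mem_Qpos.mpr (Or.inr (Or.inr (Or.inr (Or.inl ⟨i1, hi1, rfl⟩)))), ?_⟩, ?_⟩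
      · rw [Qpos_black, if_neg (fun h => hh.ne_u i1 h.symm),
          if_neg (by simp only [GV.u.injEq]; rintro rfl; exact hi0 hi1)]
        rfl
      · rw [(agrees_move_u hh hi0 hi1).blackWinsAux n false]
        refine ih.2 (S.erase i1) Pd hub i1 (by rw [Finset.card_erase_of_mem hi1]; omega)
          (Finset.notMem_erase i1 S) (hh.mono (Finset.erase_subset i1 S)) ?_ n ?_
        · rw [Finset.card_erase_of_mem hi1]; omega
        · rw [Finset.card_erase_of_mem hi1]; omega
    refine ⟨hLB, ?_⟩
    intro S Pd hub i0 hm hi0 hh hPd n hn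
    obtain ⟨n, rfl⟩ : ∃ m, n = m + 1 := ⟨n - 1, by omega⟩
    have hcard : 1 < (Qpos S Pd hub i0).verts.card :=
      Finset.one_lt_card.mpr ⟨hub, hub_mem, GV.u i0, u0_mem, hh.ne_u i0⟩
    rw [blackWinsAux, if_neg (by omega), if_neg (by simp)]
    intro v hv
    obtain ⟨-, hvm, hvb⟩ := hv
    rcases mem_Qpos.mp hvm with rfl | rfl | ⟨i, hi, rfl⟩ | ⟨i, hi, rfl⟩ | ⟨k, hk, rfl⟩
    · rw [Qpos_black, if_pos rfl] at hvb; exact absurd hvb (by simp)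
    · exact Qpos_grab_u0 hh hi0 (k1 := (Finset.card_pos.mp (by omega)).choose)
        (Finset.card_pos.mp (by omega)).choose_spec n (by omega)
    · -- white moves at a cell vertex `v i`
      rw [(agrees_move_v hh hi0 hi).blackWinsAux n true]
      refine ih.1 (S.erase i) Pd (GV.v i) i0 (by rw [Finset.card_erase_of_mem hi]; omega)
        (fun h => hi0 (Finset.mem_of_mem_erase h)) (Or.inr ⟨i, rfl, Finset.notMem_erase i S⟩)
        ?_ n ?_
      · rw [Finset.card_erase_of_mem hi]; omega
      · rw [Finset.card_erase_of_mem hi]; omega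
    · -- `u i` with `i ∈ S` is white: contradiction
      rw [Qpos_black, if_neg (fun h => hh.ne_u i h.symm),
        if_neg (by simp only [GV.u.injEq]; rintro rfl; exact hi0 hi)] at hvb
      exact absurd hvb (by simp [Gblack])
    · -- white moves at a pendant
      rw [(agrees_move_w hh hi0 hk).blackWinsAux n true]
      exact hLB S (Pd.erase k) (GV.w k) i0 hm hi0 (Or.inl ⟨k, rfl, Finset.notMem_erase k Pd⟩)
        (by rw [Finset.card_erase_of_mem hk]; omega) n (by omega)
end Gadget6
section Endgame
open PB
set_option maxHeartbeats 2000000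
variable {ι κ : Type} [Fintype ι] [Fintype κ] [DecidableEq ι] [DecidableEq κ]
variable {A : κ → Finset ι} {K : ℕ}

lemma GPos_verts (A : κ → Finset ι) (K : ℕ) : (GPos A K).verts = Finset.univ := rfl

lemma GPos_black (x : GV ι κ K) : (GPos A K).black x = Gblack x := rfl

lemma GPos_adj (x y : GV ι κ K) : (GPos A K).adj x y = (Gedge A x y || Gedge A y x) := rfl

lemma mem_nbrs_r {x : GV ι κ K} :
    x ∈ (GPos A K).nbrs GV.r ↔ (∃ i, x = GV.u i) ∨ (∃ j k, x = GV.t j k) ∨ x = GV.s := by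
  rcases x <;> simp [mem_nbrs, GPos, Gedge]

lemma mem_nbrs_w0 {k0 : Fin K} {x : GV ι κ K} :
    x ∈ (GPos A K).nbrs (GV.w k0) ↔ (∃ j k, x = GV.t j k) ∨ x = GV.s := by
  rcases x <;> simp [mem_nbrs, GPos, Gedge]
end Endgame
section Endgame2
open PB
set_option maxHeartbeats 4000000
variable {ι κ : Type} [Fintype ι] [Fintype κ] [DecidableEq ι] [DecidableEq κ]
variable {A : κ → Finset ι} {K : ℕ}

lemma mem_P1 {x : GV ι κ K} :
    x ∈ (move false (GPos A K) GV.r).verts ↔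
      x = GV.r ∨ (∃ i, x = GV.v i) ∨ ∃ k, x = GV.w k := by
  rw [move_verts]
  rcases x <;> simp [mem_nbrs_r, GPos_verts]

lemma winsAux_r (hK0 : 0 < K) :
    ∀ n, 1 ≤ n → blackWinsAux n true (move false (GPos A K) GV.r) := by
  refine grab (c := GV.r) (d := GV.w ⟨0, hK0⟩) ?_ ?_ ?_ (by simp) ?_
  · rw [move_verts]; exact Finset.mem_insert_self _ _
  · rw [move_black, if_pos rfl]
  · exact mem_P1.mpr (Or.inr (Or.inr ⟨_, rfl⟩))
  · ext x
    simp only [mem_nbrs, Finset.mem_erase]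
    constructor
    · rintro ⟨hxv, hadj⟩
      rw [move_adj_iff] at hadj
      exact ⟨(hadj.2.2.1).symm, hxv⟩
    · rintro ⟨hxr, hxv⟩
      refine ⟨hxv, (move_adj_iff _ _ _ _ _).mpr
        ⟨Finset.mem_insert_self _ _, hxv, fun h => hxr h.symm, Or.inl ⟨rfl, ?_⟩⟩⟩
      rcases mem_P1.mp hxv with rfl | ⟨i, rfl⟩ | ⟨k, rfl⟩
      · exact absurd rfl hxr
      · exact Or.inr ⟨GV.u i, mem_nbrs_r.mpr (Or.inl ⟨i, rfl⟩), by simp [GPos_adj, Gedge]⟩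
      · exact Or.inr ⟨GV.s, mem_nbrs_r.mpr (Or.inr (Or.inr rfl)), by simp [GPos_adj, Gedge]⟩

lemma mem_P2 {k0 : Fin K} {x : GV ι κ K} :
    x ∈ (move false (GPos A K) (GV.w k0)).verts ↔
      x = GV.r ∨ (∃ i, x = GV.v i) ∨ (∃ i, x = GV.u i) ∨ ∃ k, x = GV.w k := by
  rw [move_verts]
  rcases x <;> simp [mem_nbrs_w0, GPos_verts]

lemma winsAux_w_empty (hι : IsEmpty ι) (k0 : Fin K) :
    ∀ n, 1 ≤ n → blackWinsAux n true (move false (GPos A K) (GV.w k0)) := by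
  refine grab (c := GV.w k0) (d := GV.r) ?_ ?_ ?_ (by simp) ?_
  · rw [move_verts]; exact Finset.mem_insert_self _ _
  · rw [move_black, if_pos rfl]
  · exact mem_P2.mpr (Or.inl rfl)
  · ext x
    simp only [mem_nbrs, Finset.mem_erase]
    constructor
    · rintro ⟨hxv, hadj⟩
      rw [move_adj_iff] at hadj
      exact ⟨(hadj.2.2.1).symm, hxv⟩
    · rintro ⟨hxr, hxv⟩
      refine ⟨hxv, (move_adj_iff _ _ _ _ _).mpr
        ⟨Finset.mem_insert_self _ _, hxv, fun h => hxr h.symm, Or.inl ⟨rfl, ?_⟩⟩⟩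
      rcases mem_P2.mp hxv with rfl | ⟨i, rfl⟩ | ⟨i, rfl⟩ | ⟨k, rfl⟩
      · exact Or.inr ⟨GV.s, mem_nbrs_w0.mpr (Or.inr rfl), by simp [GPos_adj, Gedge]⟩
      · exact hι.elim i
      · exact hι.elim i
      · exact Or.inr ⟨GV.s, mem_nbrs_w0.mpr (Or.inr rfl), by simp [GPos_adj, Gedge]⟩

/-- Clean description of adjacency after White moves at `w k0`. -/
def R2 (k0 : Fin K) (x y : GV ι κ K) : Prop :=
  (x = GV.r ∧ ∃ i, y = GV.u i) ∨ (∃ i, x = GV.v i ∧ y = GV.u i) ∨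
  (x = GV.w k0 ∧ (y = GV.r ∨ (∃ i, y = GV.v i) ∨ ∃ k, y = GV.w k ∧ k ≠ k0))

lemma P2_adj {k0 : Fin K} {x y : GV ι κ K}
    (hx : x ∈ (move false (GPos A K) (GV.w k0)).verts)
    (hy : y ∈ (move false (GPos A K) (GV.w k0)).verts) :
    ((move false (GPos A K) (GV.w k0)).adj x y = true ↔ R2 k0 x y ∨ R2 k0 y x) := by
  rw [move_adj_iff]
  have hx' := mem_P2.mp hx
  have hy' := mem_P2.mp hy
  have hex : ∀ z : GV ι κ K, (z = GV.r ∨ (∃ i, z = GV.v i) ∨ (∃ i, z = GV.u i) ∨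
      ∃ k, z = GV.w k) →
      ((∃ w ∈ (GPos A K).nbrs (GV.w k0), (GPos A K).adj w z = true) ↔
        (z = GV.r ∨ (∃ i, z = GV.v i) ∨ ∃ k, z = GV.w k)) := by
    intro z hz
    constructor
    · rintro ⟨w, hw, hadj⟩
      rcases mem_nbrs_w0.mp hw with ⟨j, k, rfl⟩ | rfl <;>
        rcases hz with rfl | ⟨i, rfl⟩ | ⟨i, rfl⟩ | ⟨k', rfl⟩ <;>
          simp_all [GPos_adj, Gedge]
    · rintro (rfl | ⟨i, rfl⟩ | ⟨k', rfl⟩)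
      · exact ⟨GV.s, mem_nbrs_w0.mpr (Or.inr rfl), by simp [GPos_adj, Gedge]⟩
      · exact ⟨GV.s, mem_nbrs_w0.mpr (Or.inr rfl), by simp [GPos_adj, Gedge]⟩
      · exact ⟨GV.s, mem_nbrs_w0.mpr (Or.inr rfl), by simp [GPos_adj, Gedge]⟩
  constructor
  · rintro ⟨-, -, hxy, hc⟩
    rcases hc with ⟨rfl, hc⟩ | ⟨hne, rfl, hc⟩ | ⟨hn1, hn2, hc⟩
    · -- x = w k0
      rcases hc with hc | hc
      · rcases hy' with rfl | ⟨i, rfl⟩ | ⟨i, rfl⟩ | ⟨k, rfl⟩ <;> simp_all [GPos_adj, Gedge]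
      · have := (hex y hy').mp hc
        rcases this with rfl | ⟨i, rfl⟩ | ⟨k, rfl⟩
        · exact Or.inl (Or.inr (Or.inr ⟨rfl, Or.inl rfl⟩))
        · exact Or.inl (Or.inr (Or.inr ⟨rfl, Or.inr (Or.inl ⟨i, rfl⟩)⟩))
        · exact Or.inl (Or.inr (Or.inr ⟨rfl, Or.inr (Or.inr ⟨k, rfl,
            fun h => hxy (by rw [h])⟩)⟩))
    · -- y = w k0
      rcases hc with hc | hc
      · rcases hx' with rfl | ⟨i, rfl⟩ | ⟨i, rfl⟩ | ⟨k, rfl⟩ <;> simp_all [GPos_adj, Gedge]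
      · have := (hex x hx').mp hc
        rcases this with rfl | ⟨i, rfl⟩ | ⟨k, rfl⟩
        · exact Or.inr (Or.inr (Or.inr ⟨rfl, Or.inl rfl⟩))
        · exact Or.inr (Or.inr (Or.inr ⟨rfl, Or.inr (Or.inl ⟨i, rfl⟩)⟩))
        · exact Or.inr (Or.inr (Or.inr ⟨rfl, Or.inr (Or.inr ⟨k, rfl,
            fun h => hxy (by rw [h])⟩)⟩))
    · -- neither is w k0
      rcases hx' with rfl | ⟨i, rfl⟩ | ⟨i, rfl⟩ | ⟨k, rfl⟩ <;>
        rcases hy' with rfl | ⟨i', rfl⟩ | ⟨i', rfl⟩ | ⟨k', rfl⟩ <;>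
          simp_all [GPos_adj, Gedge, R2]
  · intro hc
    have hxy : x ≠ y := by
      rintro rfl
      rcases hc with (⟨rfl, h⟩ | ⟨i, rfl, h⟩ | ⟨rfl, h | ⟨i, h⟩ | ⟨k, h, hk⟩⟩) |
        (⟨rfl, h⟩ | ⟨i, rfl, h⟩ | ⟨rfl, h | ⟨i, h⟩ | ⟨k, h, hk⟩⟩) <;> simp_all
    refine ⟨hx, hy, hxy, ?_⟩
    by_cases hxk : x = GV.w k0
    · subst hxk
      refine Or.inl ⟨rfl, Or.inr ((hex y hy').mpr ?_)⟩
      rcases hc with (⟨h, -⟩ | ⟨i, h, -⟩ | ⟨-, hcond⟩) | (⟨rfl, -⟩ | ⟨i, rfl, h⟩ | ⟨hyx, -⟩)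
      · exact absurd h (by simp)
      · exact absurd h (by simp)
      · rcases hcond with h | ⟨i, h⟩ | ⟨k, h, -⟩
        · exact Or.inl h
        · exact Or.inr (Or.inl ⟨i, h⟩)
        · exact Or.inr (Or.inr ⟨k, h⟩)
      · exact Or.inl rfl
      · exact absurd h (by simp)
      · exact absurd hyx.symm hxy
    · by_cases hyk : y = GV.w k0
      · subst hyk
        refine Or.inr (Or.inl ⟨hxk, rfl, Or.inr ((hex x hx').mpr ?_)⟩)
        rcases hc with (⟨rfl, -⟩ | ⟨i, rfl, -⟩ | ⟨hxw, -⟩) | (⟨h, -⟩ | ⟨i, h, -⟩ | ⟨-, hcond⟩)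
        · exact Or.inl rfl
        · exact Or.inr (Or.inl ⟨i, rfl⟩)
        · exact absurd hxw hxk
        · exact absurd h (by simp)
        · exact absurd h (by simp)
        · rcases hcond with h | ⟨i, h⟩ | ⟨k, h, -⟩
          · exact Or.inl h
          · exact Or.inr (Or.inl ⟨i, h⟩)
          · exact Or.inr (Or.inr ⟨k, h⟩)
      · refine Or.inr (Or.inr ⟨hxk, hyk, ?_⟩)
        rcases hc with (⟨rfl, i, rfl⟩ | ⟨i, rfl, rfl⟩ | ⟨hxw, -⟩) |
          (⟨rfl, i, rfl⟩ | ⟨i, rfl, rfl⟩ | ⟨hyw, -⟩)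
        · simp [GPos_adj, Gedge]
        · simp [GPos_adj, Gedge]
        · exact absurd hxw hxk
        · simp [GPos_adj, Gedge]
        · simp [GPos_adj, Gedge]
        · exact absurd hyw hyk
end Endgame2
section Bridge
open PB
set_option maxHeartbeats 8000000
set_option maxRecDepth 10000
variable {ι κ : Type} [Fintype ι] [Fintype κ] [DecidableEq ι] [DecidableEq κ]
variable {A : κ → Finset ι} {K : ℕ}

lemma P2_nbrs_u0 (i0 : ι) (k0 : Fin K) :
    (move false (GPos A K) (GV.w k0)).nbrs (GV.u i0) = {GV.v i0, GV.r} := by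
  have hu0 : GV.u i0 ∈ (move false (GPos A K) (GV.w k0)).verts :=
    mem_P2.mpr (Or.inr (Or.inr (Or.inl ⟨i0, rfl⟩)))
  ext x
  simp only [mem_nbrs, Finset.mem_insert, Finset.mem_singleton]
  constructor
  · rintro ⟨hxm, hadj⟩
    rw [P2_adj hu0 hxm] at hadj
    rcases hadj with (⟨h, -⟩ | ⟨i, h, -⟩ | ⟨h, -⟩) |
      (⟨rfl, -⟩ | ⟨i, rfl, h⟩ | ⟨-, h | ⟨i, h⟩ | ⟨k, h, -⟩⟩)
    · exact absurd h (by simp)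
    · exact absurd h (by simp)
    · exact absurd h (by simp)
    · exact Or.inr rfl
    · injection h with h2; subst h2; exact Or.inl rfl
    · exact absurd h (by simp)
    · exact absurd h (by simp)
    · exact absurd h (by simp)
  · rintro (rfl | rfl)
    · refine ⟨mem_P2.mpr (Or.inr (Or.inl ⟨i0, rfl⟩)), ?_⟩
      rw [P2_adj hu0 (mem_P2.mpr (Or.inr (Or.inl ⟨i0, rfl⟩)))]
      exact Or.inr (Or.inr (Or.inl ⟨i0, rfl, rfl⟩))
    · refine ⟨mem_P2.mpr (Or.inl rfl), ?_⟩
      rw [P2_adj hu0 (mem_P2.mpr (Or.inl rfl))]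
      exact Or.inr (Or.inl ⟨rfl, i0, rfl⟩)

lemma agrees_P2 (i0 : ι) (k0 : Fin K) :
    Agrees (move true (move false (GPos A K) (GV.w k0)) (GV.u i0))
      (Qpos (Finset.univ.erase i0) (Finset.univ.erase k0) (GV.w k0) i0) := by
  have hnb := P2_nbrs_u0 (A := A) i0 k0
  have hverts : (move true (move false (GPos A K) (GV.w k0)) (GV.u i0)).verts =
      (Qpos (Finset.univ.erase i0) (Finset.univ.erase k0) (GV.w k0) i0).verts := by
    rw [move_verts, hnb]
    ext x
    simp only [Finset.mem_insert, Finset.mem_sdiff, Finset.mem_singleton, mem_P2,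
      mem_Qpos, Finset.mem_erase, Finset.mem_univ]
    rcases x <;> (try aesop) <;> exact Decidable.em _
  have hsub : ∀ z, z ∈ (move true (move false (GPos A K) (GV.w k0)) (GV.u i0)).verts →
      z ∈ (move false (GPos A K) (GV.w k0)).verts := by
    intro z hz
    rw [move_verts, Finset.mem_insert] at hz
    rcases hz with rfl | hz
    · exact mem_P2.mpr (Or.inr (Or.inr (Or.inl ⟨i0, rfl⟩)))
    · exact (Finset.mem_sdiff.mp hz).1
  refine ⟨hverts, ?_, ?_⟩
  · intro x hx
    rw [move_black, move_black, Qpos_black]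
    by_cases h1 : x = GV.u i0
    · subst h1; rw [if_pos rfl, if_neg (by simp), if_pos rfl]
    · rw [if_neg h1]
      by_cases h2 : x = GV.w k0
      · rw [if_pos h2, if_pos h2]
      · rw [if_neg h2, if_neg h2, if_neg h1]; rfl
  · intro x hx y hy
    have hxP2 := hsub x hx
    have hyP2 := hsub y hy
    have hu0 : GV.u i0 ∈ (move false (GPos A K) (GV.w k0)).verts :=
      mem_P2.mpr (Or.inr (Or.inr (Or.inl ⟨i0, rfl⟩)))
    have hv0 : GV.v i0 ∈ (move false (GPos A K) (GV.w k0)).verts :=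
      mem_P2.mpr (Or.inr (Or.inl ⟨i0, rfl⟩))
    have hr0 : GV.r ∈ (move false (GPos A K) (GV.w k0)).verts :=
      mem_P2.mpr (Or.inl rfl)
    have e0 := P2_adj (A := A) hxP2 hyP2
    have e0' := P2_adj (A := A) hyP2 hxP2
    have e1y := P2_adj (A := A) hu0 hyP2
    have e2y := P2_adj (A := A) hv0 hyP2
    have e3y := P2_adj (A := A) hr0 hyP2
    have e1x := P2_adj (A := A) hu0 hxP2
    have e2x := P2_adj (A := A) hv0 hxP2
    have e3x := P2_adj (A := A) hr0 hxP2
    have hx' := hverts ▸ hx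
    have hy' := hverts ▸ hy
    rw [Bool.eq_iff_iff, move_adj_iff, Qpos_adj_iff, hnb]
    simp only [Finset.mem_insert, Finset.mem_singleton, exists_eq_or_imp, exists_eq_left,
      e0, e0', e1y, e2y, e3y, e1x, e2x, e3x, R2, QE, mem_Qpos, Finset.mem_erase, Finset.mem_univ,
      and_true, hverts] at *
    rcases x <;> rcases y <;>
      aesop (config := { maxRuleApplications := 8000 })
end Bridge
section Final
open PB
set_option maxHeartbeats 4000000
variable {ι κ : Type} [Fintype ι] [Fintype κ] [DecidableEq ι] [DecidableEq κ]
variable {A : κ → Finset ι} {K : ℕ}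

lemma winsAux_w_nonempty (hK : Fintype.card ι + 2 ≤ K) (i0 : ι) (k0 : Fin K) :
    ∀ n, 2 * Fintype.card ι + 1 ≤ n →
      blackWinsAux n true (move false (GPos A K) (GV.w k0)) := by
  intro n hn
  have hI : 1 ≤ Fintype.card ι := Fintype.card_pos_iff.mpr ⟨i0⟩
  obtain ⟨n, rfl⟩ : ∃ m, n = m + 1 := ⟨n - 1, by omega⟩
  have hr : GV.r ∈ (move false (GPos A K) (GV.w k0)).verts := mem_P2.mpr (Or.inl rfl)
  have hw0 : GV.w k0 ∈ (move false (GPos A K) (GV.w k0)).verts :=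
    mem_P2.mpr (Or.inr (Or.inr (Or.inr ⟨k0, rfl⟩)))
  have hu0 : GV.u i0 ∈ (move false (GPos A K) (GV.w k0)).verts :=
    mem_P2.mpr (Or.inr (Or.inr (Or.inl ⟨i0, rfl⟩)))
  have hcard : 1 < (move false (GPos A K) (GV.w k0)).verts.card :=
    Finset.one_lt_card.mpr ⟨GV.r, hr, GV.w k0, hw0, by simp⟩
  rw [blackWinsAux, if_neg (by omega), if_pos rfl]
  refine ⟨GV.u i0, ⟨hcard, hu0, ?_⟩, ?_⟩
  · rw [move_black, if_neg (by simp)]; rfl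
  · rw [(agrees_P2 (A := A) i0 k0).blackWinsAux n false]
    have hSc : (Finset.univ.erase i0).card = Fintype.card ι - 1 := by
      rw [Finset.card_erase_of_mem (Finset.mem_univ i0), Finset.card_univ]
    have hPc : (Finset.univ.erase k0).card = K - 1 := by
      rw [Finset.card_erase_of_mem (Finset.mem_univ k0), Finset.card_univ,
        Fintype.card_fin]
    refine (Qpos_wins (Fintype.card ι - 1)).2 (Finset.univ.erase i0)
      (Finset.univ.erase k0) (GV.w k0) i0 hSc (Finset.notMem_erase i0 _)
      (Or.inl ⟨k0, rfl, Finset.notMem_erase k0 _⟩) (by omega) n (by omega)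

lemma P2_card_lb (k0 : Fin K) :
    2 * Fintype.card ι + 1 ≤ (move false (GPos A K) (GV.w k0)).verts.card := by
  classical
  have hsub : ({GV.r} : Finset (GV ι κ K)) ∪ Finset.univ.image GV.v ∪
      Finset.univ.image GV.u ⊆ (move false (GPos A K) (GV.w k0)).verts := by
    intro x hx
    simp only [Finset.mem_union, Finset.mem_singleton, Finset.mem_image] at hx
    rcases hx with (rfl | ⟨i, -, rfl⟩) | ⟨i, -, rfl⟩
    · exact mem_P2.mpr (Or.inl rfl)
    · exact mem_P2.mpr (Or.inr (Or.inl ⟨i, rfl⟩))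
    · exact mem_P2.mpr (Or.inr (Or.inr (Or.inl ⟨i, rfl⟩)))
  have hv : (Finset.univ.image (GV.v : ι → GV ι κ K)).card = Fintype.card ι := by
    rw [Finset.card_image_of_injective _ (fun a b h => by injection h), Finset.card_univ]
  have hu : (Finset.univ.image (GV.u : ι → GV ι κ K)).card = Fintype.card ι := by
    rw [Finset.card_image_of_injective _ (fun a b h => by injection h), Finset.card_univ]
  have hd1 : Disjoint (({GV.r} : Finset (GV ι κ K)) ∪ Finset.univ.image GV.v)
      (Finset.univ.image GV.u) := by
    rw [Finset.disjoint_left]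
    intro a ha hb
    simp only [Finset.mem_union, Finset.mem_singleton, Finset.mem_image] at ha hb
    obtain ⟨i, -, rfl⟩ := hb
    rcases ha with h | ⟨i', -, h⟩ <;> simp_all
  have hd2 : Disjoint ({GV.r} : Finset (GV ι κ K)) (Finset.univ.image GV.v) := by
    rw [Finset.disjoint_left]
    intro a ha hb
    simp only [Finset.mem_singleton] at ha
    subst ha
    simp only [Finset.mem_image] at hb
    obtain ⟨i, -, h⟩ := hb
    simp at h
  calc 2 * Fintype.card ι + 1
      = (({GV.r} : Finset (GV ι κ K)) ∪ Finset.univ.image GV.v ∪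
          Finset.univ.image GV.u).card := by
        rw [Finset.card_union_of_disjoint hd1, Finset.card_union_of_disjoint hd2,
          Finset.card_singleton, hv, hu]
        omega
    _ ≤ _ := Finset.card_le_card hsub
end Final
open PB in
/-- white shenanigans: in `G_K(C, A)` with `K ≥ |C| + 2` and
White to move, if White moves anywhere other than a vertex of type `v`
(namely at `r` or at some `w k`), then Black wins the resulting position. -/
theorem paintbucket_white_shenanigans
    {ι κ : Type} [Fintype ι] [Fintype κ] [DecidableEq ι] [DecidableEq κ]
    (A : κ → Finset ι) (K : ℕ) (hK : Fintype.card ι + 2 ≤ K)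
    (x : GV ι κ K) (hx : x = GV.r ∨ ∃ k, x = GV.w k) :
    blackWins true (move false (GPos A K) x) := by
  rcases hx with rfl | ⟨k0, rfl⟩
  · have hK0 : 0 < K := by omega
    have hmem : GV.r ∈ (move false (GPos A K) GV.r).verts := by
      rw [move_verts]; exact Finset.mem_insert_self _ _
    exact winsAux_r hK0 _ (Finset.card_pos.mpr ⟨GV.r, hmem⟩)
  · by_cases hι : Nonempty ι
    · obtain ⟨i0⟩ := hι
      exact winsAux_w_nonempty hK i0 k0 _ (P2_card_lb k0)
    · have hIE : IsEmpty ι := not_nonempty_iff.mp hι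
      have hmem : GV.w k0 ∈ (move false (GPos A K) (GV.w k0)).verts := by
        rw [move_verts]; exact Finset.mem_insert_self _ _
      exact winsAux_w_empty hIE k0 _ (Finset.card_pos.mpr ⟨_, hmem⟩)
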